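/- arXiv:1809.10283 — 5 statements merged into one kernel-verified Lean document; each statement's English description precedes it below -/
import Mathlib

section
/- Let T₁ = (f₁, r₁) and T₂ = (f₂, r₂) be Behavior Trees over ℝⁿ. Suppose T₁ is Finite Time Successful with region of attraction R₁' and step bound N₁, T₂ is Finite Time Successful with region of attraction R₂' and step bound N₂, and suppose S₁ = R₂' ∪ S₂, where S₁, S₂ are the Success regions of T₁, T₂. Then the Sequence composition T₀ = Sequence(T₁, T₂) is Finite Time Successful with region of attraction R₀' = R₁' ∪ R₂', step bound N₀ = N₁ + N₂, and success region S₀ = S₁ ∩ S₂ = S₂: for every x₀ ∈ R₁' ∪ R₂' there exists k ≤ N₁ + N₂ such that the iterates of f₀ satisfy f₀ʲ(x₀) ∈ R₁' ∪ R₂' for all 0 ≤ j < k and f₀ᵏ(x₀) ∈ S₂. -/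
/-- Return status of a Behavior Tree tick. -/
inductive BTStatus : Type
  | Running
  | Success
  | Failure
  deriving DecidableEq

/-- A Behavior Tree over ℝⁿ: a transition map `f` and a return-status map `r`. -/
structure BT (n : ℕ) where
  f : EuclideanSpace ℝ (Fin n) → EuclideanSpace ℝ (Fin n)
  r : EuclideanSpace ℝ (Fin n) → BTStatus

namespace BT

variable {n : ℕ}

/-- Success region. -/
def S (T : BT n) : Set (EuclideanSpace ℝ (Fin n)) := {x | T.r x = BTStatus.Success}

/-- Running region. -/
def R (T : BT n) : Set (EuclideanSpace ℝ (Fin n)) := {x | T.r x = BTStatus.Running}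

/-- Failure region. -/
def F (T : BT n) : Set (EuclideanSpace ℝ (Fin n)) := {x | T.r x = BTStatus.Failure}

/-- Sequence composition of two Behavior Trees. -/
def Sequence (T₁ T₂ : BT n) : BT n where
  f x := if T₁.r x = BTStatus.Success then T₂.f x else T₁.f x
  r x := if T₁.r x = BTStatus.Success then T₂.r x else T₁.r x

/-- Fallback composition of two Behavior Trees. -/
def Fallback (T₁ T₂ : BT n) : BT n where
  f x := if T₁.r x = BTStatus.Failure then T₂.f x else T₁.f x
  r x := if T₁.r x = BTStatus.Failure then T₂.r x else T₁.r x

/-- `T` is Finite Time Successful with region of attraction `R'` and step bound `N`: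
from every `x₀ ∈ R'` there is `k ≤ N` such that the iterates stay in `R'` before step `k`
and lie in the Success region at step `k`. -/
def FTS (T : BT n) (R' : Set (EuclideanSpace ℝ (Fin n))) (N : ℕ) : Prop :=
  ∀ x₀ ∈ R', ∃ k ≤ N, (∀ j < k, T.f^[j] x₀ ∈ R') ∧ T.f^[k] x₀ ∈ T.S

/-- `T` is safe w.r.t. obstacle region `O` and initialization region `I`:
executions starting in `I` never reach `O`. -/
def Safe (T : BT n) (O I : Set (EuclideanSpace ℝ (Fin n))) : Prop :=
  ∀ x₀ ∈ I, ∀ k : ℕ, T.f^[k] x₀ ∉ O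

/-- `T` is safeguarding w.r.t. step length `d`, obstacle region `O`, initialization
region `I` and reachable set `X`. -/
def Safeguarding (T : BT n) (d : ℝ) (O I X : Set (EuclideanSpace ℝ (Fin n))) : Prop :=
  T.Safe O I ∧
  (∃ R' N, I ⊆ R' ∧ T.FTS R' N) ∧
  {x ∈ X | x ∉ T.S ∧ Metric.infDist x T.S ≤ d} ⊆ I

end BT

/-- Auxiliary: from a point of `R₂' ⊆ S₁`, the Sequence composition behaves as `T₂`. -/
lemma sequence_aux {n : ℕ} (T₁ T₂ : BT n) (R₂' : Set (EuclideanSpace ℝ (Fin n))) (N₂ : ℕ)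
    (h₂ : T₂.FTS R₂' N₂) (hsub : R₂' ⊆ T₁.S) :
    ∀ x₀ ∈ R₂', ∃ k ≤ N₂, (∀ j < k, (T₁.Sequence T₂).f^[j] x₀ ∈ R₂') ∧
      (T₁.Sequence T₂).f^[k] x₀ ∈ T₂.S := by
  intro x₀ hx₀
  obtain ⟨k, hk, hrun, hsucc⟩ := h₂ x₀ hx₀
  have heq : ∀ j ≤ k, (T₁.Sequence T₂).f^[j] x₀ = T₂.f^[j] x₀ := by
    intro j hj
    induction j with
    | zero => rfl
    | succ i ih =>
      rw [Function.iterate_succ_apply', Function.iterate_succ_apply',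
        ih (Nat.le_of_succ_le hj)]
      have hi : T₂.f^[i] x₀ ∈ R₂' := hrun i (Nat.lt_of_succ_le hj)
      have hS : T₁.r (T₂.f^[i] x₀) = BTStatus.Success := hsub hi
      simp [BT.Sequence, hS]
  exact ⟨k, hk, fun j hj => (heq j hj.le) ▸ hrun j hj, (heq k le_rfl) ▸ hsucc⟩

/-- Robustness and efficiency of Sequence compositions: if `T₁, T₂` are FTS with
regions of attraction `R₁', R₂'` and step bounds `N₁, N₂`, and `S₁ = R₂' ∪ S₂`,
then `Sequence(T₁, T₂)` is FTS with region of attraction `R₁' ∪ R₂'`, step bound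
`N₁ + N₂`, and success region `S₁ ∩ S₂ = S₂`. -/
theorem sequence_composition_FTS {n : ℕ} (T₁ T₂ : BT n)
    (R₁' R₂' : Set (EuclideanSpace ℝ (Fin n))) (N₁ N₂ : ℕ)
    (h₁ : T₁.FTS R₁' N₁) (h₂ : T₂.FTS R₂' N₂)
    (hS : T₁.S = R₂' ∪ T₂.S) :
    (T₁.Sequence T₂).S = T₁.S ∩ T₂.S ∧
    T₁.S ∩ T₂.S = T₂.S ∧
    ∀ x₀ ∈ R₁' ∪ R₂', ∃ k ≤ N₁ + N₂,
      (∀ j < k, (T₁.Sequence T₂).f^[j] x₀ ∈ R₁' ∪ R₂') ∧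
      (T₁.Sequence T₂).f^[k] x₀ ∈ T₂.S := by
  classical
  have hsub : R₂' ⊆ T₁.S := hS ▸ Set.subset_union_left
  have hS₂sub : T₂.S ⊆ T₁.S := hS ▸ Set.subset_union_right
  refine ⟨?_, ?_, ?_⟩
  · ext x
    by_cases hx : T₁.r x = BTStatus.Success <;>
      simp [BT.Sequence, BT.S, hx]
  · apply Set.inter_eq_right.mpr hS₂sub
  · intro x₀ hx₀
    have aux := sequence_aux T₁ T₂ R₂' N₂ h₂ hsub
    rcases hx₀ with hx₀ | hx₀
    · -- x₀ ∈ R₁'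
      obtain ⟨k₁, hk₁, hrun₁, hsucc₁⟩ := h₁ x₀ hx₀
      have hex : ∃ j, j ≤ k₁ ∧ T₁.f^[j] x₀ ∈ T₁.S := ⟨k₁, le_rfl, hsucc₁⟩
      -- m = least j with f₁^[j] x₀ ∈ S₁
      let m := Nat.find hex
      obtain ⟨hmle, hmS⟩ : m ≤ k₁ ∧ T₁.f^[m] x₀ ∈ T₁.S := Nat.find_spec hex
      have hnotS : ∀ j < m, T₁.f^[j] x₀ ∉ T₁.S := by
        intro j hj hmem
        exact (Nat.find_min hex hj) ⟨hj.le.trans hmle, hmem⟩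
      have heq : ∀ j ≤ m, (T₁.Sequence T₂).f^[j] x₀ = T₁.f^[j] x₀ := by
        intro j hj
        induction j with
        | zero => rfl
        | succ i ih =>
          rw [Function.iterate_succ_apply', Function.iterate_succ_apply',
            ih (Nat.le_of_succ_le hj)]
          have hi : T₁.f^[i] x₀ ∉ T₁.S := hnotS i (Nat.lt_of_succ_le hj)
          have : ¬ T₁.r (T₁.f^[i] x₀) = BTStatus.Success := hi
          simp [BT.Sequence, this]
      have hrunm : ∀ j < m, (T₁.Sequence T₂).f^[j] x₀ ∈ R₁' ∪ R₂' := by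
        intro j hj
        exact Or.inl ((heq j hj.le) ▸ hrun₁ j (lt_of_lt_of_le hj hmle))
      have hym : (T₁.Sequence T₂).f^[m] x₀ ∈ R₂' ∪ T₂.S := by
        rw [heq m le_rfl]; exact hS ▸ hmS
      rcases hym with hy | hy
      · -- switch to T₂ from y
        obtain ⟨k₂, hk₂, hrun₂, hsucc₂⟩ := aux _ hy
        refine ⟨k₂ + m, by omega, ?_, ?_⟩
        · intro j hj
          rcases Nat.lt_or_ge j m with h | h
          · exact hrunm j h
          · obtain ⟨i, rfl⟩ := Nat.exists_eq_add_of_le h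
            rw [Nat.add_comm m i, Function.iterate_add_apply]
            exact Or.inr (hrun₂ i (by omega))
        · rw [Function.iterate_add_apply]
          exact hsucc₂
      · exact ⟨m, by omega, hrunm, hy⟩
    · -- x₀ ∈ R₂'
      obtain ⟨k, hk, hrun, hsucc⟩ := aux x₀ hx₀
      exact ⟨k, by omega, fun j hj => Or.inr (hrun j hj), hsucc⟩
end

section
/- Let T₁, T₂, T₃ be Behavior Trees over ℝⁿ that are Finite Time Successful with regions of attraction R₁', R₂', R₃' and step bounds N₁, N₂, N₃ respectively, with Success regions S₁, S₂, S₃. If S₁ = R₂' ∪ S₂ and S₂ = R₃' ∪ S₃, then the three-child Sequence composition Sequence(T₁, T₂, T₃) := Sequence(T₁, Sequence(T₂, T₃)) is Finite Time Successful with region of attraction R₁' ∪ R₂' ∪ R₃', step bound N₁ + N₂ + N₃, and success region S₃. -/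
section Aux

variable {n : ℕ}

/-- While the iterates of `T₁` avoid `T₁.S`, the sequence composition follows `T₁`. -/
lemma seq_track₁ (T₁ T₂ : BT n) (x : EuclideanSpace ℝ (Fin n)) (m : ℕ)
    (h : ∀ j < m, T₁.f^[j] x ∉ T₁.S) :
    ∀ j ≤ m, (T₁.Sequence T₂).f^[j] x = T₁.f^[j] x := by
  intro j hj
  induction j with
  | zero => rfl
  | succ j ih =>
    rw [Function.iterate_succ_apply', Function.iterate_succ_apply',
        ih (Nat.le_of_succ_le hj)]
    have hns : T₁.f^[j] x ∉ T₁.S := h j (lt_of_lt_of_le (Nat.lt_succ_self j) hj)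
    simp only [BT.S, Set.mem_setOf_eq] at hns
    simp only [BT.Sequence, if_neg hns]

/-- While the iterates of `T₂` stay in `T₁.S`, the sequence composition follows `T₂`. -/
lemma seq_track₂ (T₁ T₂ : BT n) (x : EuclideanSpace ℝ (Fin n)) (m : ℕ)
    (h : ∀ j < m, T₂.f^[j] x ∈ T₁.S) :
    ∀ j ≤ m, (T₁.Sequence T₂).f^[j] x = T₂.f^[j] x := by
  intro j hj
  induction j with
  | zero => rfl
  | succ j ih =>
    rw [Function.iterate_succ_apply', Function.iterate_succ_apply',
        ih (Nat.le_of_succ_le hj)]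
    have hs : T₂.f^[j] x ∈ T₁.S := h j (lt_of_lt_of_le (Nat.lt_succ_self j) hj)
    simp only [BT.S, Set.mem_setOf_eq] at hs
    simp only [BT.Sequence, if_pos hs]

/-- From a point of `R₂'`, the sequence composition reaches its success region
within `N₂` steps while staying in `R₂'`. -/
lemma seq_phase₂ (T₁ T₂ : BT n) (R₂' : Set (EuclideanSpace ℝ (Fin n))) (N₂ : ℕ)
    (h₂ : T₂.FTS R₂' N₂) (hR : R₂' ⊆ T₁.S) (hS : T₂.S ⊆ T₁.S)
    (y : EuclideanSpace ℝ (Fin n)) (hy : y ∈ R₂') :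
    ∃ k ≤ N₂, (∀ j < k, (T₁.Sequence T₂).f^[j] y ∈ R₂') ∧
      (T₁.Sequence T₂).f^[k] y ∈ (T₁.Sequence T₂).S := by
  classical
  obtain ⟨k₂, hk₂, hrun, hsucc⟩ := h₂ y hy
  have hex : ∃ j, T₂.f^[j] y ∈ T₂.S := ⟨k₂, hsucc⟩
  set m := Nat.find hex with hm
  have hmle : m ≤ k₂ := Nat.find_le hsucc
  have hmS : T₂.f^[m] y ∈ T₂.S := Nat.find_spec hex
  have hpre : ∀ j < m, T₂.f^[j] y ∈ R₂' := fun j hj =>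
    hrun j (lt_of_lt_of_le hj hmle)
  have htrack := seq_track₂ T₁ T₂ y m (fun j hj => hR (hpre j hj))
  refine ⟨m, le_trans hmle hk₂, ?_, ?_⟩
  · intro j hj
    rw [htrack j (le_of_lt hj)]
    exact hpre j hj
  · rw [htrack m le_rfl]
    have h1 : T₂.f^[m] y ∈ T₁.S := hS hmS
    simp only [BT.S, Set.mem_setOf_eq] at h1 hmS ⊢
    simp only [BT.Sequence, if_pos h1]
    exact hmS

/-- Two-child sequence composition lemma. -/
lemma seq_FTS (T₁ T₂ : BT n) (R₁' R₂' : Set (EuclideanSpace ℝ (Fin n))) (N₁ N₂ : ℕ)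
    (h₁ : T₁.FTS R₁' N₁) (h₂ : T₂.FTS R₂' N₂) (hS₁ : T₁.S = R₂' ∪ T₂.S) :
    (T₁.Sequence T₂).S = T₂.S ∧ (T₁.Sequence T₂).FTS (R₁' ∪ R₂') (N₁ + N₂) := by
  classical
  have hR : R₂' ⊆ T₁.S := hS₁ ▸ Set.subset_union_left
  have hS : T₂.S ⊆ T₁.S := hS₁ ▸ Set.subset_union_right
  constructor
  · ext x
    by_cases h : T₁.r x = BTStatus.Success
    · simp [BT.S, BT.Sequence, h]
    · simp only [BT.S, BT.Sequence, Set.mem_setOf_eq, if_neg h]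
      constructor
      · intro hx; exact absurd hx h
      · intro hx; exact absurd (hS hx) h
  · intro x₀ hx₀
    rcases hx₀ with hx₀ | hx₀
    · -- start in R₁'
      obtain ⟨k₁, hk₁, hrun, hsucc⟩ := h₁ x₀ hx₀
      have hex : ∃ j, T₁.f^[j] x₀ ∈ T₁.S := ⟨k₁, hsucc⟩
      set m := Nat.find hex with hm
      have hmle : m ≤ k₁ := Nat.find_le hsucc
      have hmS : T₁.f^[m] x₀ ∈ T₁.S := Nat.find_spec hex
      have hpre : ∀ j < m, T₁.f^[j] x₀ ∉ T₁.S := fun j hj => Nat.find_min hex hj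
      have hpreR : ∀ j < m, T₁.f^[j] x₀ ∈ R₁' := fun j hj =>
        hrun j (lt_of_lt_of_le hj hmle)
      have htrack := seq_track₁ T₁ T₂ x₀ m hpre
      set y := (T₁.Sequence T₂).f^[m] x₀ with hy
      have hyS : y ∈ T₁.S := by rw [hy, htrack m le_rfl]; exact hmS
      rcases (hS₁ ▸ hyS : y ∈ R₂' ∪ T₂.S) with hyR | hyS₂
      · -- continue with phase 2
        obtain ⟨k₂, hk₂, hrun₂, hsucc₂⟩ := seq_phase₂ T₁ T₂ R₂' N₂ h₂ hR hS y hyR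
        refine ⟨m + k₂, by omega, ?_, ?_⟩
        · intro j hj
          by_cases hjm : j < m
          · rw [htrack j (le_of_lt hjm)]
            exact Or.inl (hpreR j hjm)
          · push_neg at hjm
            obtain ⟨i, rfl⟩ := Nat.exists_eq_add_of_le hjm
            rw [add_comm m i, Function.iterate_add_apply]
            exact Or.inr (hrun₂ i (by omega))
        · rw [add_comm m k₂, Function.iterate_add_apply]
          exact hsucc₂
      · -- y is already successful
        refine ⟨m, by omega, ?_, ?_⟩
        · intro j hj
          rw [htrack j (le_of_lt hj)]
          exact Or.inl (hpreR j hj)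
        · simp only [BT.S, Set.mem_setOf_eq] at hyS hyS₂ ⊢
          have hstep : (T₁.Sequence T₂).r y = T₂.r y := by
            show (if T₁.r y = BTStatus.Success then T₂.r y else T₁.r y) = T₂.r y
            rw [if_pos hyS]
          rw [show (T₁.Sequence T₂).f^[m] x₀ = y from rfl, hstep]
          exact hyS₂
    · -- start in R₂'
      obtain ⟨k₂, hk₂, hrun₂, hsucc₂⟩ := seq_phase₂ T₁ T₂ R₂' N₂ h₂ hR hS x₀ hx₀
      exact ⟨k₂, by omega, fun j hj => Or.inr (hrun₂ j hj), hsucc₂⟩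

end Aux

/-- Three-child Sequence composition: if `T₁, T₂, T₃` are FTS with regions of
attraction `R₁', R₂', R₃'` and step bounds `N₁, N₂, N₃`, with `S₁ = R₂' ∪ S₂` and
`S₂ = R₃' ∪ S₃`, then `Sequence(T₁, T₂, T₃) = Sequence(T₁, Sequence(T₂, T₃))` is FTS
with region of attraction `R₁' ∪ R₂' ∪ R₃'`, step bound `N₁ + N₂ + N₃`, and success
region `S₃`. -/
theorem three_child_sequence_FTS {n : ℕ} (T₁ T₂ T₃ : BT n)
    (R₁' R₂' R₃' : Set (EuclideanSpace ℝ (Fin n))) (N₁ N₂ N₃ : ℕ)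
    (h₁ : T₁.FTS R₁' N₁) (h₂ : T₂.FTS R₂' N₂) (h₃ : T₃.FTS R₃' N₃)
    (hS₁ : T₁.S = R₂' ∪ T₂.S) (hS₂ : T₂.S = R₃' ∪ T₃.S) :
    (T₁.Sequence (T₂.Sequence T₃)).S = T₃.S ∧
    ∀ x₀ ∈ R₁' ∪ R₂' ∪ R₃', ∃ k ≤ N₁ + N₂ + N₃,
      (∀ j < k, (T₁.Sequence (T₂.Sequence T₃)).f^[j] x₀ ∈ R₁' ∪ R₂' ∪ R₃') ∧
      (T₁.Sequence (T₂.Sequence T₃)).f^[k] x₀ ∈ T₃.S := by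
  obtain ⟨hS23, hFTS23⟩ := seq_FTS T₂ T₃ R₂' R₃' N₂ N₃ h₂ h₃ hS₂
  have hS₁' : T₁.S = (R₂' ∪ R₃') ∪ (T₂.Sequence T₃).S := by
    rw [hS23, Set.union_assoc, ← hS₂, hS₁]
  obtain ⟨hSall, hFTSall⟩ :=
    seq_FTS T₁ (T₂.Sequence T₃) R₁' (R₂' ∪ R₃') N₁ (N₂ + N₃) h₁ hFTS23 hS₁'
  refine ⟨by rw [hSall, hS23], ?_⟩
  intro x₀ hx₀
  have hx₀' : x₀ ∈ R₁' ∪ (R₂' ∪ R₃') := by rwa [← Set.union_assoc]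
  obtain ⟨k, hk, hrun, hsucc⟩ := hFTSall x₀ hx₀'
  refine ⟨k, by omega, fun j hj => ?_, ?_⟩
  · have := hrun j hj
    rwa [← Set.union_assoc] at this
  · rwa [hSall, hS23] at hsucc
end

section
/- Let T₁ = (f₁, r₁) be a Behavior Tree over ℝⁿ that is safeguarding with respect to step length d > 0, obstacle region O, initialization region I, and reachable set X, and assume O ∩ S₁ = ∅, where S₁ is the Success region of T₁. Let T₂ = (f₂, r₂) be an arbitrary Behavior Tree whose transition map satisfies ‖x − f₂(x)‖ < d for all x ∈ ℝⁿ. Assume every point reachable from I under iteration of the transition map f₀ of T₀ = Sequence(T₁, T₂) lies in X. Then T₀ is safe with respect to O and I: for every x₀ ∈ I, every iterate f₀ᵏ(x₀), k ≥ 0, lies outside O. -/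
/-- Safety of Sequence compositions: if `T₁` is safeguarding w.r.t. step length `d`,
obstacle region `O`, initialization region `I` and reachable set `X`, with `O`
disjoint from the success region of `T₁`, and `T₂` is an arbitrary BT whose transition
map moves the state by less than `d`, and every point reachable from `I` under the
composition lies in `X`, then `Sequence(T₁, T₂)` is safe w.r.t. `O` and `I`. -/
theorem sequence_composition_safe {n : ℕ} (T₁ T₂ : BT n) (d : ℝ) (hd : 0 < d)
    (O I X : Set (EuclideanSpace ℝ (Fin n)))
    (hsg : T₁.Safeguarding d O I X)
    (hOS : O ∩ T₁.S = ∅)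
    (hstep : ∀ x, ‖x - T₂.f x‖ < d)
    (hreach : ∀ x₀ ∈ I, ∀ k : ℕ, (T₁.Sequence T₂).f^[k] x₀ ∈ X) :
    ∀ x₀ ∈ I, ∀ k : ℕ, (T₁.Sequence T₂).f^[k] x₀ ∉ O := by
  classical
  obtain ⟨hsafe, ⟨R', N, hIR, hfts⟩, hnear⟩ := hsg
  set f₀ := (T₁.Sequence T₂).f with hf₀
  have key : ∀ m : ℕ, ∀ x ∈ I, (∀ k, f₀^[k] x ∈ X) → f₀^[m] x ∉ O := by
    intro m
    induction m using Nat.strong_induction_on with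
    | _ m ih =>
      intro x hxI hX
      obtain ⟨k, hkN, hkR, hkS⟩ := hfts x (hIR hxI)
      have hex : ∃ j, T₁.f^[j] x ∈ T₁.S := ⟨k, hkS⟩
      set k₀ := Nat.find hex with hk₀
      have hk₀S : T₁.f^[k₀] x ∈ T₁.S := Nat.find_spec hex
      have hlt : ∀ j < k₀, T₁.f^[j] x ∉ T₁.S := fun j hj => Nat.find_min hex hj
      have hagree : ∀ j ≤ k₀, f₀^[j] x = T₁.f^[j] x := by
        intro j hj
        induction j with
        | zero => rfl
        | succ i hi =>
          have hi' := hi (Nat.le_of_succ_le hj)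
          rw [Function.iterate_succ_apply', Function.iterate_succ_apply', hi']
          have hns : T₁.f^[i] x ∉ T₁.S := hlt i (Nat.lt_of_succ_le hj)
          simp only [BT.S, Set.mem_setOf_eq] at hns
          simp [hf₀, BT.Sequence, hns]
      by_cases hm : m ≤ k₀
      · rw [hagree m hm]; exact hsafe x hxI m
      push_neg at hm
      by_cases hall : ∀ j, k₀ ≤ j → j ≤ m → f₀^[j] x ∈ T₁.S
      · have hmS := hall m hm.le le_rfl
        intro hO
        have : f₀^[m] x ∈ O ∩ T₁.S := ⟨hO, hmS⟩
        rw [hOS] at this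
        exact this
      · push_neg at hall
        obtain ⟨j, hj1, hj2, hjS⟩ := hall
        have hex2 : ∃ j, k₀ ≤ j ∧ j ≤ m ∧ f₀^[j] x ∉ T₁.S := ⟨j, hj1, hj2, hjS⟩
        set j₀ := Nat.find hex2 with hj₀
        obtain ⟨hj₀1, hj₀2, hj₀S⟩ : k₀ ≤ j₀ ∧ j₀ ≤ m ∧ f₀^[j₀] x ∉ T₁.S := Nat.find_spec hex2
        have hk₀S' : f₀^[k₀] x ∈ T₁.S := by rw [hagree k₀ le_rfl]; exact hk₀S
        have hj₀gt : k₀ < j₀ := by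
          rcases lt_or_eq_of_le hj₀1 with h | h
          · exact h
          · exact absurd (h ▸ hk₀S') hj₀S
        have hprevS : f₀^[j₀ - 1] x ∈ T₁.S := by
          by_contra hc
          have := Nat.find_min hex2 (m := j₀ - 1) (by omega)
          exact this ⟨by omega, by omega, hc⟩
        set p := f₀^[j₀ - 1] x with hp
        have hzeq : f₀^[j₀] x = T₂.f p := by
          have : j₀ = (j₀ - 1) + 1 := by omega
          rw [this, Function.iterate_succ_apply', ← hp]
          have hps : T₁.r p = BTStatus.Success := hprevS
          simp [hf₀, BT.Sequence, hps]
        set z := f₀^[j₀] x with hz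
        have hzX : z ∈ X := hX j₀
        have hzI : z ∈ I := by
          apply hnear
          refine ⟨hzX, hj₀S, ?_⟩
          calc Metric.infDist z T₁.S ≤ dist z p := Metric.infDist_le_dist_of_mem hprevS
            _ = ‖p - T₂.f p‖ := by rw [hzeq, dist_eq_norm, norm_sub_rev]
            _ ≤ d := (hstep p).le
        have hrest : f₀^[m] x = f₀^[m - j₀] z := by
          rw [hz, ← Function.iterate_add_apply]
          congr 1
          omega
        rw [hrest]
        refine ih (m - j₀) (by omega) z hzI ?_
        intro k'
        rw [← Function.iterate_add_apply]
        exact hX _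
  intro x₀ hx₀ k
  exact key k x₀ hx₀ (fun k' => hreach x₀ hx₀ k')
end

section
/- Let T₁ = (f₁, r₁) be a Behavior Tree over ℝⁿ that is safeguarding with respect to step length d > 0, obstacle region O, initialization region I, and reachable set X, with O ∩ S₁ = ∅ where S₁ is the Success region of T₁. Let T₂ and T₃ be arbitrary Behavior Trees whose transition maps satisfy ‖x − f₂(x)‖ < d and ‖x − f₃(x)‖ < d for all x ∈ ℝⁿ, and assume every point reachable from I under iteration of the transition map of T₀ = Sequence(T₁, Sequence(T₂, T₃)) lies in X. Then T₀ is safe with respect to O and I, independently of the choice of T₂ and T₃: for every x₀ ∈ I, every iterate of the transition map of T₀ starting from x₀ lies outside O. -/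
/-- Safety of the full tree, independently of the subtrees `T₂, T₃`: if `T₁` is
safeguarding w.r.t. step length `d`, obstacle region `O`, initialization region `I`
and reachable set `X`, with `O` disjoint from the success region of `T₁`, and
`T₂, T₃` are arbitrary BTs whose transition maps move the state by less than `d`,
and every point reachable from `I` under `T₀ = Sequence(T₁, Sequence(T₂, T₃))` lies
in `X`, then `T₀` is safe w.r.t. `O` and `I`. -/
theorem full_tree_safe {n : ℕ} (T₁ T₂ T₃ : BT n) (d : ℝ) (hd : 0 < d)
    (O I X : Set (EuclideanSpace ℝ (Fin n)))
    (hsg : T₁.Safeguarding d O I X)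
    (hOS : O ∩ T₁.S = ∅)
    (hstep₂ : ∀ x, ‖x - T₂.f x‖ < d)
    (hstep₃ : ∀ x, ‖x - T₃.f x‖ < d)
    (hreach : ∀ x₀ ∈ I, ∀ k : ℕ, (T₁.Sequence (T₂.Sequence T₃)).f^[k] x₀ ∈ X) :
    ∀ x₀ ∈ I, ∀ k : ℕ, (T₁.Sequence (T₂.Sequence T₃)).f^[k] x₀ ∉ O := by
  intro x₀ hx₀ k
  obtain ⟨hsafe, -, hI⟩ := hsg
  set T₀ := T₁.Sequence (T₂.Sequence T₃) with hT₀
  have key : ∀ k, T₀.f^[k] x₀ ∈ T₁.S ∨ ∃ y ∈ I, ∃ j, T₀.f^[k] x₀ = T₁.f^[j] y := by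
    intro k
    induction k with
    | zero => exact Or.inr ⟨x₀, hx₀, 0, rfl⟩
    | succ k ih =>
      rw [Function.iterate_succ_apply']
      set x := T₀.f^[k] x₀ with hx
      by_cases hxS : x ∈ T₁.S
      · have hr : T₁.r x = BTStatus.Success := hxS
        have hf : T₀.f x = (T₂.Sequence T₃).f x := by
          simp [hT₀, BT.Sequence, hr]
        have hmove : ‖x - T₀.f x‖ < d := by
          rw [hf]
          by_cases h2 : T₂.r x = BTStatus.Success
          · simpa [BT.Sequence, h2] using hstep₃ x
          · simpa [BT.Sequence, h2] using hstep₂ x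
        by_cases hS' : T₀.f x ∈ T₁.S
        · exact Or.inl hS'
        · refine Or.inr ⟨T₀.f x, ?_, 0, rfl⟩
          apply hI
          refine ⟨?_, hS', ?_⟩
          · have := hreach x₀ hx₀ (k+1)
            rwa [Function.iterate_succ_apply'] at this
          · calc Metric.infDist (T₀.f x) T₁.S ≤ dist (T₀.f x) x :=
                Metric.infDist_le_dist_of_mem hxS
              _ = ‖x - T₀.f x‖ := by rw [dist_eq_norm, norm_sub_rev]
              _ ≤ d := hmove.le
      · rcases ih with h | ⟨y, hy, j, hj⟩
        · exact absurd h hxS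
        · refine Or.inr ⟨y, hy, j+1, ?_⟩
          have hr : ¬ T₁.r x = BTStatus.Success := hxS
          have hf : T₀.f x = T₁.f x := by
            simp [hT₀, BT.Sequence, hr]
          rw [hf, hj]; exact (Function.iterate_succ_apply' _ _ _).symm
  rcases key k with h | ⟨y, hy, j, hj⟩
  · intro hO
    have hmem : T₀.f^[k] x₀ ∈ O ∩ T₁.S := ⟨hO, h⟩
    simp [hOS] at hmem
  · rw [hj]; exact hsafe y hy j
end

section
/- Let f : ℝⁿ → ℝⁿ be continuous and let x_s ∈ ℝⁿ be a globally asymptotically stable equilibrium of the discrete-time system x_{k+1} = f(x_k), meaning: (i) f(x_s) = x_s; (ii) for every x ∈ ℝⁿ, fᵏ(x) → x_s as k → ∞; (iii) Lyapunov stability: for every ε > 0 there exists δ > 0 such that ‖x − x_s‖ < δ implies ‖fᵏ(x) − x_s‖ < ε for all k ≥ 0. Then for every compact set K ⊆ ℝⁿ and every ε > 0 there exists N ∈ ℕ such that for every x ∈ K and every k ≥ N, ‖fᵏ(x) − x_s‖ < ε. In particular, the system reaches any success region S ⊇ {x : ‖x − x_s‖ < ε} from K within a uniformly bounded number of steps,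 i.e. the corresponding Behavior Tree is Finite Time Successful on compact sets of initial conditions. -/
/-- Global asymptotic stability gives uniform finite-time convergence on compact sets:
if `x_s` is a globally asymptotically stable equilibrium of the continuous discrete-time
system `x_{k+1} = f(x_k)` (fixed point, global attractivity, Lyapunov stability), then
for every compact set `K` and every `ε > 0` there is a uniform `N` such that all
executions starting in `K` are within `ε` of `x_s` from step `N` onwards. -/
theorem gas_uniform_convergence_on_compacts {n : ℕ}
    (f : EuclideanSpace ℝ (Fin n) → EuclideanSpace ℝ (Fin n))
    (xs : EuclideanSpace ℝ (Fin n))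
    (hf : Continuous f)
    (hfix : f xs = xs)
    (hattr : ∀ x : EuclideanSpace ℝ (Fin n),
      Filter.Tendsto (fun k : ℕ => f^[k] x) Filter.atTop (nhds xs))
    (hstab : ∀ ε > (0 : ℝ), ∃ δ > (0 : ℝ), ∀ x : EuclideanSpace ℝ (Fin n),
      ‖x - xs‖ < δ → ∀ k : ℕ, ‖f^[k] x - xs‖ < ε) :
    ∀ K : Set (EuclideanSpace ℝ (Fin n)), IsCompact K → ∀ ε > (0 : ℝ),
      ∃ N : ℕ, ∀ x ∈ K, ∀ k ≥ N, ‖f^[k] x - xs‖ < ε := by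
  intro K hK ε hε
  obtain ⟨δ, hδ, hδprop⟩ := hstab ε hε
  have key : ∀ x : EuclideanSpace ℝ (Fin n), ∃ m : ℕ,
      {y | ‖f^[m] y - xs‖ < δ} ∈ nhds x := by
    intro x
    have h1 : ∀ᶠ k in Filter.atTop, ‖f^[k] x - xs‖ < δ := by
      have h2 : Filter.Tendsto (fun k : ℕ => ‖f^[k] x - xs‖) Filter.atTop (nhds 0) := by
        simpa using ((hattr x).sub_const xs).norm
      exact h2.eventually_lt_const hδ
    obtain ⟨m, hm⟩ := h1.exists
    refine ⟨m, ?_⟩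
    have hc : Continuous fun y => ‖f^[m] y - xs‖ := ((hf.iterate m).sub continuous_const).norm
    exact (hc.continuousAt (x := x)).preimage_mem_nhds (Iio_mem_nhds hm)
  choose m hm using key
  obtain ⟨t, _, hcover⟩ := hK.elim_nhds_subcover (fun x => {y | ‖f^[m x] y - xs‖ < δ}) fun x _ => hm x
  refine ⟨t.sup m, fun x hx k hk => ?_⟩
  obtain ⟨z, hz, hxz⟩ := Set.mem_iUnion₂.mp (hcover hx)
  have hmz : m z ≤ k := le_trans (Finset.le_sup hz) hk
  have : f^[k] x = f^[k - m z] (f^[m z] x) := by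
    rw [← Function.iterate_add_apply, Nat.sub_add_cancel hmz]
  rw [this]
  exact hδprop _ hxz _
end
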